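/- Let p(dx) = e^{−u(x)} dx be a probability measure on ℝ^d with u ∈ C¹, satisfying a Poincaré inequality with constant C_P: for all f ∈ H¹(p) with ∫ f dp = 0 one has ∫ f² dp ≤ C_P ∫ |∇f|² dp. Define the operator ℒ := Δ − ∇u·∇. Then for every function f ∈ C² ∩ W^{2,2}(p) with f² ∈ W^{2,1}(p) and ℒf ∈ L²(p), the following inequality holds: C_P^{-1} (∫ f dp)² ∫ |∇f|² dp ≤ (∫ f² dp)(∫ (ℒf)² dp) − (∫ f ℒf dp)². -/

import Mathlib

open MeasureTheory Real Filter Set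
open scoped RealInnerProductSpace Topology ENNReal NNReal

noncomputable section

/-- Euclidean space `ℝ^d`. -/
abbrev Euc (d : ℕ) := EuclideanSpace ℝ (Fin d)
/-- Divergence of a vector field. -/
def divg {d : ℕ} (V : Euc d → Euc d) (x : Euc d) : ℝ :=
  ∑ i, ⟪fderiv ℝ V x (EuclideanSpace.single i 1), EuclideanSpace.single i 1⟫

/-- Laplacian of a scalar function. -/
def lap {d : ℕ} (f : Euc d → ℝ) (x : Euc d) : ℝ := divg (gradient f) x

/-- The operator `ℒ f = Δf − ∇u·∇f`. -/
def Lop {d : ℕ} (u f : Euc d → ℝ) (x : Euc d) : ℝ :=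
  lap f x - ⟪gradient u x, gradient f x⟫

/-- Expand a continuous linear functional over the standard ONB. -/
lemma clm_apply_eq_sum {d : ℕ} (l : Euc d →L[ℝ] ℝ) (v : Euc d) :
    ∑ i, ⟪v, EuclideanSpace.single i 1⟫ * l (EuclideanSpace.single i 1) = l v := by
  set b := EuclideanSpace.basisFun (Fin d) ℝ
  have hb : ∀ i, (b : OrthonormalBasis (Fin d) ℝ (Euc d)) i = EuclideanSpace.single i 1 :=
    fun i => EuclideanSpace.basisFun_apply _ _ i
  calc ∑ i, ⟪v, EuclideanSpace.single i 1⟫ * l (EuclideanSpace.single i 1)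
      = ∑ i, b.repr v i * l (b i) := by
        refine Finset.sum_congr rfl fun i _ => ?_
        rw [b.repr_apply_apply, real_inner_comm, hb]
    _ = l (∑ i, b.repr v i • b i) := by
        rw [map_sum]; simp [ContinuousLinearMap.map_smul, smul_eq_mul]
    _ = l v := by rw [b.sum_repr]

/-- Parseval-type identity. -/
lemma inner_eq_sum {d : ℕ} (a v : Euc d) :
    ∑ i, ⟪v, EuclideanSpace.single i 1⟫ * ⟪a, EuclideanSpace.single i 1⟫ = ⟪a, v⟫ := by
  have := clm_apply_eq_sum (innerSL ℝ a) v
  simpa using this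

lemma divg_smul {d : ℕ} {c : Euc d → ℝ} {W : Euc d → Euc d} {x : Euc d}
    (hc : DifferentiableAt ℝ c x) (hW : DifferentiableAt ℝ W x) :
    divg (fun y => c y • W y) x = fderiv ℝ c x (W x) + c x * divg W x := by
  have h : HasFDerivAt (fun y => c y • W y)
      (c x • fderiv ℝ W x + (fderiv ℝ c x).smulRight (W x)) x :=
    hc.hasFDerivAt.smul hW.hasFDerivAt
  rw [divg]
  simp only [h.fderiv, ContinuousLinearMap.add_apply, ContinuousLinearMap.coe_smul',
    Pi.smul_apply, ContinuousLinearMap.smulRight_apply, inner_add_left,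
    real_inner_smul_left]
  rw [Finset.sum_add_distrib, divg, ← Finset.mul_sum]
  have h2 : ∑ i, (fderiv ℝ c x) (EuclideanSpace.single i 1) * ⟪W x, EuclideanSpace.single i 1⟫
      = fderiv ℝ c x (W x) := by
    rw [← clm_apply_eq_sum (fderiv ℝ c x) (W x)]
    exact Finset.sum_congr rfl fun i _ => mul_comm _ _
  rw [h2]
  ring

theorem integral_divg_eq_zero {d : ℕ} {V : Euc d → Euc d} (hV : ContDiff ℝ 1 V)
    (hVi : Integrable V volume) (hdVi : Integrable (divg V) volume) :
    (∫ x, divg V x) = 0 := by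
  classical
  -- the bump function
  set χ : ContDiffBump (0 : Euc d) :=
    { rIn := 1, rOut := 2, rIn_pos := one_pos, rIn_lt_rOut := one_lt_two } with hχ
  set c : ℕ → ℝ := fun n => ((n : ℝ) + 1)⁻¹ with hc
  have hc_pos : ∀ n, 0 < c n := fun n => by positivity
  have hc_le : ∀ n, c n ≤ 1 := fun n => by
    rw [hc]; simp only
    rw [inv_le_one_iff₀]; right; linarith [Nat.cast_nonneg (α := ℝ) n]
  set L : ℕ → (Euc d →L[ℝ] Euc d) := fun n => c n • ContinuousLinearMap.id ℝ (Euc d) with hL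
  have hLapp : ∀ n x, L n x = c n • x := fun n x => rfl
  set ψ : ℕ → Euc d → ℝ := fun n x => χ (c n • x) with hψ
  have hψcomp : ∀ n, ψ n = (χ : Euc d → ℝ) ∘ (L n) := fun n => rfl
  have hχsm : ContDiff ℝ 1 (χ : Euc d → ℝ) := χ.contDiff
  have hψsm : ∀ n, ContDiff ℝ 1 (ψ n) := fun n => hχsm.comp (L n).contDiff
  have hψcs : ∀ n, HasCompactSupport (ψ n) := by
    intro n
    have : ψ n = (χ : Euc d → ℝ) ∘ (Homeomorph.smulOfNeZero (c n) (hc_pos n).ne') := rfl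
    rw [this]
    exact χ.hasCompactSupport.comp_homeomorph _
  -- derivative of ψ n
  have hψd : ∀ n x, HasFDerivAt (ψ n) ((fderiv ℝ (χ : Euc d → ℝ) (c n • x)).comp (L n)) x := by
    intro n x
    have h1 : HasFDerivAt (χ : Euc d → ℝ) (fderiv ℝ (χ : Euc d → ℝ) (c n • x)) (L n x) :=
      ((hχsm.differentiable one_ne_zero) (L n x)).hasFDerivAt
    exact h1.comp x (L n).hasFDerivAt
  -- bound on the derivative of χ
  obtain ⟨C, hC⟩ : ∃ C, ∀ x, ‖fderiv ℝ (χ : Euc d → ℝ) x‖ ≤ C :=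
    Continuous.bounded_above_of_compact_support
      (hχsm.continuous_fderiv one_ne_zero) (χ.hasCompactSupport.fderiv ℝ)
  have hC0 : 0 ≤ C := le_trans (norm_nonneg _) (hC 0)
  have hψd_bound : ∀ n x, ‖fderiv ℝ (ψ n) x‖ ≤ C * c n := by
    intro n x
    rw [(hψd n x).fderiv]
    calc ‖(fderiv ℝ (χ : Euc d → ℝ) (c n • x)).comp (L n)‖
        ≤ ‖fderiv ℝ (χ : Euc d → ℝ) (c n • x)‖ * ‖L n‖ := ContinuousLinearMap.opNorm_comp_le _ _
      _ ≤ C * c n := by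
          apply mul_le_mul (hC _) ?_ (norm_nonneg _) hC0
          apply ContinuousLinearMap.opNorm_le_bound _ (hc_pos n).le
          intro x'
          rw [hLapp, norm_smul, Real.norm_eq_abs, abs_of_pos (hc_pos n)]
  set e : Fin d → Euc d := fun i => EuclideanSpace.single i 1 with he
  have hVd : Differentiable ℝ V := hV.differentiable one_ne_zero
  have hfdVcont : Continuous (fderiv ℝ V) := hV.continuous_fderiv one_ne_zero
  have hVcont : Continuous V := hVd.continuous
  have hVid : ∀ (i : Fin d) x, HasFDerivAt (fun y => ⟪V y, e i⟫)
      ((innerSL ℝ (e i)).comp (fderiv ℝ V x)) x := by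
    intro i x
    have h1 : HasFDerivAt (fun y => (innerSL ℝ (e i)) (V y))
        ((innerSL ℝ (e i)).comp (fderiv ℝ V x)) x :=
      ((innerSL ℝ (e i)).hasFDerivAt).comp x (hVd x).hasFDerivAt
    have h2 : (fun y => ⟪V y, e i⟫) = fun y => (innerSL ℝ (e i)) (V y) := by
      funext y; rw [innerSL_apply_apply]; exact real_inner_comm _ _
    rw [h2]; exact h1
  have hVidiff : ∀ (i : Fin d), Differentiable ℝ (fun y => ⟪V y, e i⟫) :=
    fun i x => (hVid i x).differentiableAt
  have hVicont : ∀ (i : Fin d), Continuous (fun y => ⟪V y, e i⟫) :=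
    fun i => (hVcont.inner continuous_const)
  have hdiVcont : ∀ (i : Fin d), Continuous (fun x => ⟪fderiv ℝ V x (e i), e i⟫) :=
    fun i => ((hfdVcont.clm_apply continuous_const).inner continuous_const)
  have hψcont : ∀ n, Continuous (ψ n) := fun n => (hψsm n).continuous
  have hdψcont : ∀ n, Continuous (fderiv ℝ (ψ n)) := fun n => (hψsm n).continuous_fderiv one_ne_zero
  have hdψicont : ∀ n (i : Fin d), Continuous (fun x => fderiv ℝ (ψ n) x (e i)) :=
    fun n i => ((hdψcont n).clm_apply continuous_const)
  have hdψics : ∀ n (i : Fin d), HasCompactSupport (fun x => fderiv ℝ (ψ n) x (e i)) := by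
    intro n i
    exact ((hψcs n).fderiv ℝ).comp_left (g := fun (l : Euc d →L[ℝ] ℝ) => l (e i)) rfl
  -- integrability of the three products
  have int1 : ∀ n (i : Fin d), Integrable (fun x => ⟪fderiv ℝ V x (e i), e i⟫ * ψ n x) volume :=
    fun n i => ((hdiVcont i).mul (hψcont n)).integrable_of_hasCompactSupport ((hψcs n).mul_left)
  have int2 : ∀ n (i : Fin d), Integrable (fun x => ⟪V x, e i⟫ * fderiv ℝ (ψ n) x (e i)) volume :=
    fun n i => ((hVicont i).mul (hdψicont n i)).integrable_of_hasCompactSupport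
      ((hdψics n i).mul_left)
  have int3 : ∀ n (i : Fin d), Integrable (fun x => ⟪V x, e i⟫ * ψ n x) volume :=
    fun n i => ((hVicont i).mul (hψcont n)).integrable_of_hasCompactSupport ((hψcs n).mul_left)
  have hfd_eq : ∀ (i : Fin d) x, fderiv ℝ (fun y => ⟪V y, e i⟫) x (e i)
      = ⟪fderiv ℝ V x (e i), e i⟫ := by
    intro i x
    rw [(hVid i x).fderiv, ContinuousLinearMap.comp_apply, innerSL_apply_apply]
    exact real_inner_comm _ _
  have key1 : ∀ n (i : Fin d), ∫ x, ⟪fderiv ℝ V x (e i), e i⟫ * ψ n x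
      = - ∫ x, ⟪V x, e i⟫ * fderiv ℝ (ψ n) x (e i) := by
    intro n i
    have h := integral_mul_fderiv_eq_neg_fderiv_mul_of_integrable (μ := volume)
      (f := fun y => ⟪V y, e i⟫) (g := ψ n) (v := e i)
      ((int1 n i).congr (Eventually.of_forall fun x => by simp only [hfd_eq i x]))
      (int2 n i) (int3 n i) (fun x _ => hVidiff i x) (fun x _ => (hψsm n).differentiable one_ne_zero x)
    have h2 : (∫ x, fderiv ℝ (fun y => ⟪V y, e i⟫) x (e i) * ψ n x)
        = ∫ x, ⟪fderiv ℝ V x (e i), e i⟫ * ψ n x := by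
      congr 1; funext x; rw [hfd_eq i x]
    rw [h2] at h
    linarith [h]
  have intsum1 : ∀ n, Integrable (fun x => divg V x * ψ n x) volume := by
    intro n
    have : (fun x => divg V x * ψ n x)
        = fun x => ∑ i, ⟪fderiv ℝ V x (e i), e i⟫ * ψ n x := by
      funext x; rw [divg, Finset.sum_mul]
    rw [this]
    exact integrable_finset_sum _ (fun i _ => int1 n i)
  have key2 : ∀ n, (∫ x, divg V x * ψ n x) = - ∫ x, fderiv ℝ (ψ n) x (V x) := by
    intro n
    calc (∫ x, divg V x * ψ n x)
        = ∫ x, ∑ i, ⟪fderiv ℝ V x (e i), e i⟫ * ψ n x := by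
          congr 1; funext x; rw [divg, Finset.sum_mul]
      _ = ∑ i, ∫ x, ⟪fderiv ℝ V x (e i), e i⟫ * ψ n x :=
          integral_finset_sum _ (fun i _ => int1 n i)
      _ = ∑ i, - ∫ x, ⟪V x, e i⟫ * fderiv ℝ (ψ n) x (e i) :=
          Finset.sum_congr rfl fun i _ => key1 n i
      _ = - ∑ i, ∫ x, ⟪V x, e i⟫ * fderiv ℝ (ψ n) x (e i) := by rw [Finset.sum_neg_distrib]
      _ = - ∫ x, ∑ i, ⟪V x, e i⟫ * fderiv ℝ (ψ n) x (e i) := by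
          rw [integral_finset_sum _ (fun i _ => int2 n i)]
      _ = - ∫ x, fderiv ℝ (ψ n) x (V x) := by
          have hfun : (fun x => ∑ i, ⟪V x, e i⟫ * fderiv ℝ (ψ n) x (e i))
              = fun x => fderiv ℝ (ψ n) x (V x) :=
            funext fun x => clm_apply_eq_sum (fderiv ℝ (ψ n) x) (V x)
          rw [hfun]
  have hdivcont : Continuous (divg V) := by
    have : divg V = fun x => ∑ i, ⟪fderiv ℝ V x (e i), e i⟫ := by
      funext x; rw [divg]
    rw [this]
    exact continuous_finset_sum _ (fun i _ => hdiVcont i)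
  have hψ01 : ∀ n x, 0 ≤ ψ n x ∧ ψ n x ≤ 1 := fun n x => ⟨χ.nonneg, χ.le_one⟩
  have lim1 : Tendsto (fun n => ∫ x, divg V x * ψ n x) atTop (𝓝 (∫ x, divg V x)) := by
    apply tendsto_integral_of_dominated_convergence (bound := fun x => |divg V x|)
    · exact fun n => (hdivcont.mul (hψcont n)).aestronglyMeasurable
    · exact hdVi.abs
    · intro n
      refine Eventually.of_forall fun x => ?_
      rw [Real.norm_eq_abs, abs_mul]
      calc |divg V x| * |ψ n x| ≤ |divg V x| * 1 := by
            apply mul_le_mul_of_nonneg_left _ (abs_nonneg _)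
            rw [abs_of_nonneg (hψ01 n x).1]; exact (hψ01 n x).2
        _ = |divg V x| := mul_one _
    · refine Eventually.of_forall fun x => ?_
      have hev : ∀ᶠ n in atTop, ψ n x = 1 := by
        filter_upwards [eventually_ge_atTop ⌈‖x‖⌉₊] with n hn
        apply χ.one_of_mem_closedBall
        rw [Metric.mem_closedBall, dist_zero_right, norm_smul, Real.norm_eq_abs,
          abs_of_pos (hc_pos n)]
        have h1 : ‖x‖ ≤ (n : ℝ) + 1 := by
          calc ‖x‖ ≤ (⌈‖x‖⌉₊ : ℝ) := Nat.le_ceil _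
            _ ≤ (n : ℝ) := by exact_mod_cast hn
            _ ≤ (n : ℝ) + 1 := by linarith
        rw [hc]
        simp only
        rw [inv_mul_le_iff₀ (by positivity)]
        simpa [hχ] using h1
      have : Tendsto (fun _ : ℕ => divg V x) atTop (𝓝 (divg V x)) := tendsto_const_nhds
      apply Tendsto.congr' _ this
      filter_upwards [hev] with n hn
      rw [hn, mul_one]
  have lim2 : Tendsto (fun n => ∫ x, fderiv ℝ (ψ n) x (V x)) atTop (𝓝 0) := by
    have h0 : (0 : ℝ) = ∫ _x : Euc d, (0:ℝ) := by rw [integral_zero]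
    rw [h0]
    apply tendsto_integral_of_dominated_convergence (bound := fun x => C * ‖V x‖)
    · exact fun n => ((hdψcont n).clm_apply hVcont).aestronglyMeasurable
    · exact hVi.norm.const_mul C
    · intro n
      refine Eventually.of_forall fun x => ?_
      calc ‖fderiv ℝ (ψ n) x (V x)‖ ≤ ‖fderiv ℝ (ψ n) x‖ * ‖V x‖ :=
            (fderiv ℝ (ψ n) x).le_opNorm _
        _ ≤ (C * c n) * ‖V x‖ := mul_le_mul_of_nonneg_right (hψd_bound n x) (norm_nonneg _)
        _ ≤ C * ‖V x‖ := by
            apply mul_le_mul_of_nonneg_right _ (norm_nonneg _)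
            calc C * c n ≤ C * 1 := mul_le_mul_of_nonneg_left (hc_le n) hC0
              _ = C := mul_one _
    · refine Eventually.of_forall fun x => ?_
      have hb : ∀ n : ℕ, ‖fderiv ℝ (ψ n) x (V x)‖ ≤ (C * ‖V x‖) * c n := by
        intro n
        calc ‖fderiv ℝ (ψ n) x (V x)‖ ≤ ‖fderiv ℝ (ψ n) x‖ * ‖V x‖ :=
              (fderiv ℝ (ψ n) x).le_opNorm _
          _ ≤ (C * c n) * ‖V x‖ := mul_le_mul_of_nonneg_right (hψd_bound n x) (norm_nonneg _)
          _ = (C * ‖V x‖) * c n := by ring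
      have hcz : Tendsto c atTop (𝓝 0) := by
        rw [hc]
        have := (tendsto_one_div_add_atTop_nhds_zero_nat :
          Tendsto (fun n : ℕ => 1 / ((n : ℝ) + 1)) atTop (𝓝 0))
        simpa [one_div] using this
      have hg : Tendsto (fun n => (C * ‖V x‖) * c n) atTop (𝓝 0) := by
        simpa using (hcz.const_mul (C * ‖V x‖))
      exact squeeze_zero_norm hb hg
  have lim1' : Tendsto (fun n => ∫ x, divg V x * ψ n x) atTop (𝓝 0) := by
    have : (fun n => ∫ x, divg V x * ψ n x) = fun n => - ∫ x, fderiv ℝ (ψ n) x (V x) := by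
      funext n; exact key2 n
    rw [this]
    simpa using lim2.neg
  exact tendsto_nhds_unique lim1 lim1'

lemma integral_exp_weight {d : ℕ} {u : Euc d → ℝ} (hu : Continuous u) (g : Euc d → ℝ) :
    ∫ x, g x ∂(volume.withDensity fun x => ENNReal.ofReal (Real.exp (-u x)))
      = ∫ x, Real.exp (-u x) * g x := by
  have hm : Measurable (fun x => Real.toNNReal (Real.exp (-u x))) :=
    (Real.measurable_exp.comp hu.measurable.neg).real_toNNReal
  have h1 : (fun x => ENNReal.ofReal (Real.exp (-u x)))
      = fun x => ((Real.toNNReal (Real.exp (-u x)) : ℝ≥0) : ℝ≥0∞) := rfl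
  rw [h1, integral_withDensity_eq_integral_smul hm]
  congr 1
  funext x
  rw [NNReal.smul_def, Real.coe_toNNReal _ (Real.exp_pos _).le, smul_eq_mul]

lemma integrable_exp_weight {d : ℕ} {u : Euc d → ℝ} (hu : Continuous u) {g : Euc d → ℝ}
    (hg : Integrable g (volume.withDensity fun x => ENNReal.ofReal (Real.exp (-u x)))) :
    Integrable (fun x => Real.exp (-u x) * g x) volume := by
  have hm : Measurable (fun x => Real.toNNReal (Real.exp (-u x))) :=
    (Real.measurable_exp.comp hu.measurable.neg).real_toNNReal
  have h1 : (fun x => ENNReal.ofReal (Real.exp (-u x)))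
      = fun x => ((Real.toNNReal (Real.exp (-u x)) : ℝ≥0) : ℝ≥0∞) := rfl
  rw [h1] at hg
  have := (integrable_withDensity_iff_integrable_smul hm).1 hg
  apply this.congr
  refine Eventually.of_forall fun x => ?_
  show (Real.toNNReal (Real.exp (-u x))) • g x = Real.exp (-u x) * g x
  rw [NNReal.smul_def, Real.coe_toNNReal _ (Real.exp_pos _).le, smul_eq_mul]

lemma fderiv_apply_eq_inner_gradient {d : ℕ} (f : Euc d → ℝ) (x v : Euc d) :
    fderiv ℝ f x v = ⟪gradient f x, v⟫ :=
  (InnerProductSpace.toDual_symm_apply).symm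

lemma gradient_contDiff {d : ℕ} {f : Euc d → ℝ} (hf : ContDiff ℝ 2 f) :
    ContDiff ℝ 1 (gradient f) := by
  have h1 : ContDiff ℝ 1 (fun x => fderiv ℝ f x) := hf.fderiv_right (by norm_num)
  exact (InnerProductSpace.toDual ℝ (Euc d)).symm.contDiff.comp h1

lemma gradient_continuous_of_contDiff {d : ℕ} {u : Euc d → ℝ} (hu : ContDiff ℝ 1 u) :
    Continuous (gradient u) := by
  have h1 : Continuous (fun x => fderiv ℝ u x) := hu.continuous_fderiv one_ne_zero
  exact (InnerProductSpace.toDual ℝ (Euc d)).symm.continuous.comp h1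

lemma key_ibp {d : ℕ} {a : Euc d → ℝ} {f : Euc d → ℝ}
    (ha : ContDiff ℝ 1 a) (hf : ContDiff ℝ 2 f)
    (hint : Integrable (fun x => a x • gradient f x) volume)
    (hdint : Integrable (fun x => fderiv ℝ a x (gradient f x) + a x * lap f x) volume) :
    (∫ x, (fderiv ℝ a x (gradient f x) + a x * lap f x)) = 0 := by
  have hgd : ContDiff ℝ 1 (gradient f) := gradient_contDiff hf
  have hV : ContDiff ℝ 1 (fun x => a x • gradient f x) := ha.smul hgd
  have hdiv : ∀ x, divg (fun y => a y • gradient f y) x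
      = fderiv ℝ a x (gradient f x) + a x * lap f x := fun x =>
    divg_smul (ha.differentiable one_ne_zero x) (hgd.differentiable one_ne_zero x)
  have h0 := integral_divg_eq_zero hV hint
    (hdint.congr (Eventually.of_forall fun x => (hdiv x).symm))
  rw [← h0]
  exact integral_congr_ae (Eventually.of_forall fun x => (hdiv x).symm)

lemma alg_main {A B Eg m CP I : ℝ} (hCP : 0 < CP) (hA0 : 0 ≤ A) (hB0 : 0 ≤ B)
    (hE0 : 0 ≤ Eg) (hIE : I = -Eg) (hPo : A - m ^ 2 ≤ CP * Eg)
    (hdisc : (2 * I) ^ 2 - 4 * B * (A - m ^ 2) ≤ 0) :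
    CP⁻¹ * m ^ 2 * Eg ≤ A * B - I ^ 2 := by
  have hCS : Eg ^ 2 ≤ B * (A - m ^ 2) := by nlinarith [hdisc, hIE]
  have hI2 : I ^ 2 = Eg ^ 2 := by rw [hIE]; ring
  have hgoal : m ^ 2 * Eg ≤ CP * (A * B - Eg ^ 2) := by
    rcases eq_or_lt_of_le hE0 with h | h
    · rw [← h]
      have h1 := mul_nonneg hCP.le (mul_nonneg hA0 hB0)
      nlinarith [h1]
    · have hEB : Eg ≤ CP * B := by
        nlinarith [hCS, mul_le_mul_of_nonneg_left hPo hB0, h]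
      nlinarith [mul_le_mul_of_nonneg_left hCS hCP.le,
        mul_le_mul_of_nonneg_left hEB (sq_nonneg m)]
  calc CP⁻¹ * m ^ 2 * Eg = CP⁻¹ * (m ^ 2 * Eg) := by ring
    _ ≤ CP⁻¹ * (CP * (A * B - Eg ^ 2)) :=
        mul_le_mul_of_nonneg_left hgoal (by positivity)
    _ = A * B - Eg ^ 2 := by
        rw [← mul_assoc, inv_mul_cancel₀ hCP.ne', one_mul]
    _ = A * B - I ^ 2 := by rw [hI2]


/-- Functional inequality: if `p = e^{−u} dx` satisfies a Poincaré inequality with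
constant `C_P`, then for nice `f`,
`C_P⁻¹ (∫ f dp)² ∫|∇f|² dp ≤ (∫ f² dp)(∫ (ℒf)² dp) − (∫ f ℒf dp)²`. -/
theorem functional_inequality {d : ℕ} (u : Euc d → ℝ) (hu : ContDiff ℝ 1 u)
    (μ : Measure (Euc d))
    (hμ : μ = volume.withDensity fun x => ENNReal.ofReal (Real.exp (-u x)))
    (hprob : IsProbabilityMeasure μ)
    (CP : ℝ) (hCP : 0 < CP)
    (hPoincare : ∀ f : Euc d → ℝ, Differentiable ℝ f →
      Integrable f μ → Integrable (fun x => (f x) ^ 2) μ →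
      Integrable (fun x => ‖gradient f x‖ ^ 2) μ →
      (∫ x, f x ∂μ) = 0 → (∫ x, (f x) ^ 2 ∂μ) ≤ CP * ∫ x, ‖gradient f x‖ ^ 2 ∂μ)
    (f : Euc d → ℝ) (hf : ContDiff ℝ 2 f)
    (hfint : Integrable f μ)
    (hf2 : Integrable (fun x => (f x) ^ 2) μ)
    (hgrad2 : Integrable (fun x => ‖gradient f x‖ ^ 2) μ)
    (hhess2 : Integrable (fun x => ‖fderiv ℝ (gradient f) x‖ ^ 2) μ)
    (hf2grad : Integrable (fun x => ‖gradient (fun y => (f y) ^ 2) x‖) μ)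
    (hf2hess : Integrable (fun x => ‖fderiv ℝ (gradient fun y => (f y) ^ 2) x‖) μ)
    (hLf2 : Integrable (fun x => (Lop u f x) ^ 2) μ)
    (hfLf : Integrable (fun x => f x * Lop u f x) μ) :
    CP⁻¹ * (∫ x, f x ∂μ) ^ 2 * (∫ x, ‖gradient f x‖ ^ 2 ∂μ) ≤
      (∫ x, (f x) ^ 2 ∂μ) * (∫ x, (Lop u f x) ^ 2 ∂μ)
        - (∫ x, f x * Lop u f x ∂μ) ^ 2 := by
  have hucont : Continuous u := hu.continuous
  have hud : Differentiable ℝ u := hu.differentiable one_ne_zero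
  have hfd : Differentiable ℝ f := hf.differentiable (by norm_num)
  have hgd : ContDiff ℝ 1 (gradient f) := gradient_contDiff hf
  have hgdc : Continuous (gradient f) := hgd.continuous
  have hguc : Continuous (gradient u) := gradient_continuous_of_contDiff hu
  have T : ∀ {g : Euc d → ℝ}, Integrable g μ →
      Integrable (fun x => Real.exp (-u x) * g x) volume := fun {g} hg =>
    integrable_exp_weight hucont (hμ ▸ hg)
  have S : ∀ g : Euc d → ℝ, ∫ x, g x ∂μ = ∫ x, Real.exp (-u x) * g x := fun g => by
    rw [hμ]; exact integral_exp_weight hucont g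
  have hlapc : Continuous (lap f) := by
    have h1 : lap f = fun x => ∑ i, ⟪fderiv ℝ (gradient f) x (EuclideanSpace.single i 1),
        EuclideanSpace.single i 1⟫ := rfl
    rw [h1]
    exact continuous_finset_sum _ fun i _ =>
      (((hgd.continuous_fderiv one_ne_zero).clm_apply continuous_const).inner continuous_const)
  have hLopc : Continuous (Lop u f) := hlapc.sub (hguc.inner hgdc)
  have L2L1 : ∀ {g : Euc d → ℝ}, Continuous g → Integrable (fun x => g x ^ 2) μ →
      Integrable g μ := by
    intro g hc h2
    refine Integrable.mono' (((integrable_const (1:ℝ)).add h2).div_const 2)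
      hc.aestronglyMeasurable (Eventually.of_forall fun x => ?_)
    rw [Real.norm_eq_abs]
    simp only [Pi.add_apply]
    nlinarith [sq_nonneg (|g x| - 1), sq_abs (g x)]
  have hL1 : Integrable (Lop u f) μ := L2L1 hLopc hLf2
  have hgrad1 : Integrable (fun x => ‖gradient f x‖) μ := L2L1 hgdc.norm hgrad2
  -- derivative of the weight
  have hexpd : ∀ x, HasFDerivAt (fun y => Real.exp (-u y))
      (Real.exp (-u x) • (-(fderiv ℝ u x))) x := by
    intro x
    exact (Real.hasDerivAt_exp (-u x)).comp_hasFDerivAt x (hud x).hasFDerivAt.neg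
  have hexpcd : ContDiff ℝ 1 (fun y => Real.exp (-u y)) :=
    Real.contDiff_exp.comp hu.neg
  -- identity 1 : ∫ Lop dμ = 0
  have hpt1 : ∀ x, fderiv ℝ (fun y => Real.exp (-u y)) x (gradient f x)
      + Real.exp (-u x) * lap f x = Real.exp (-u x) * Lop u f x := by
    intro x
    rw [(hexpd x).fderiv]
    simp only [ContinuousLinearMap.coe_smul', Pi.smul_apply, ContinuousLinearMap.neg_apply,
      smul_eq_mul]
    rw [fderiv_apply_eq_inner_gradient u x (gradient f x), Lop]
    ring
  have hint1 : Integrable (fun x => Real.exp (-u x) • gradient f x) volume := by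
    refine Integrable.mono' (T hgrad1) ((hexpcd.continuous.smul hgdc).aestronglyMeasurable)
      (Eventually.of_forall fun x => ?_)
    rw [norm_smul, Real.norm_eq_abs, abs_of_pos (Real.exp_pos _)]
  have hJ : (∫ x, Lop u f x ∂μ) = 0 := by
    rw [S]
    have key := key_ibp hexpcd hf hint1
      ((T hL1).congr (Eventually.of_forall fun x => (hpt1 x).symm))
    rw [← key]
    exact integral_congr_ae (Eventually.of_forall fun x => (hpt1 x).symm)
  -- identity 2 : ∫ ‖∇f‖² dμ + ∫ f·Lop dμ = 0
  have ha2d : ∀ x, HasFDerivAt (fun y => f y * Real.exp (-u y))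
      (f x • (Real.exp (-u x) • (-(fderiv ℝ u x))) + Real.exp (-u x) • fderiv ℝ f x) x :=
    fun x => (hfd x).hasFDerivAt.mul (hexpd x)
  have ha2cd : ContDiff ℝ 1 (fun y => f y * Real.exp (-u y)) :=
    (hf.of_le (by norm_num)).mul hexpcd
  have hpt2 : ∀ x, fderiv ℝ (fun y => f y * Real.exp (-u y)) x (gradient f x)
      + (f x * Real.exp (-u x)) * lap f x
      = Real.exp (-u x) * (‖gradient f x‖ ^ 2 + f x * Lop u f x) := by
    intro x
    rw [(ha2d x).fderiv]
    simp only [ContinuousLinearMap.add_apply, ContinuousLinearMap.coe_smul', Pi.smul_apply,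
      ContinuousLinearMap.neg_apply, smul_eq_mul]
    rw [fderiv_apply_eq_inner_gradient u x (gradient f x),
      fderiv_apply_eq_inner_gradient f x (gradient f x), real_inner_self_eq_norm_sq, Lop]
    ring
  have hsum2 : Integrable (fun x => (f x ^ 2 + ‖gradient f x‖ ^ 2) / 2) μ :=
    (hf2.add hgrad2).div_const 2
  have hint2 : Integrable (fun x => (f x * Real.exp (-u x)) • gradient f x) volume := by
    refine Integrable.mono' (T hsum2) ((ha2cd.continuous.smul hgdc).aestronglyMeasurable)
      (Eventually.of_forall fun x => ?_)
    rw [norm_smul, Real.norm_eq_abs, abs_mul, abs_of_pos (Real.exp_pos _)]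
    have h1 : |f x| * ‖gradient f x‖ ≤ (f x ^ 2 + ‖gradient f x‖ ^ 2) / 2 := by
      nlinarith [sq_nonneg (|f x| - ‖gradient f x‖), sq_abs (f x)]
    calc |f x| * Real.exp (-u x) * ‖gradient f x‖
        = Real.exp (-u x) * (|f x| * ‖gradient f x‖) := by ring
      _ ≤ Real.exp (-u x) * ((f x ^ 2 + ‖gradient f x‖ ^ 2) / 2) :=
          mul_le_mul_of_nonneg_left h1 (Real.exp_pos _).le
  have hEI : (∫ x, ‖gradient f x‖ ^ 2 ∂μ) + (∫ x, f x * Lop u f x ∂μ) = 0 := by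
    have key := key_ibp ha2cd hf hint2
      ((T (hgrad2.add hfLf)).congr (Eventually.of_forall fun x => by
        simp only [Pi.add_apply]; exact (hpt2 x).symm))
    have h1 : (∫ x, (fderiv ℝ (fun y => f y * Real.exp (-u y)) x (gradient f x)
        + (f x * Real.exp (-u x)) * lap f x))
        = ∫ x, Real.exp (-u x) * (‖gradient f x‖ ^ 2 + f x * Lop u f x) :=
      integral_congr_ae (Eventually.of_forall fun x => hpt2 x)
    rw [h1] at key
    have h2 : (∫ x, Real.exp (-u x) * (‖gradient f x‖ ^ 2 + f x * Lop u f x))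
        = (∫ x, Real.exp (-u x) * ‖gradient f x‖ ^ 2)
          + ∫ x, Real.exp (-u x) * (f x * Lop u f x) := by
      rw [← integral_add (T hgrad2) (T hfLf)]
      exact integral_congr_ae (Eventually.of_forall fun x => by ring)
    rw [h2] at key
    rw [S (fun x => ‖gradient f x‖ ^ 2), S (fun x => f x * Lop u f x)]
    exact key
  -- notation
  set m := ∫ x, f x ∂μ with hm
  set A := ∫ x, (f x) ^ 2 ∂μ with hA
  set Eg := ∫ x, ‖gradient f x‖ ^ 2 ∂μ with hEg
  set B := ∫ x, (Lop u f x) ^ 2 ∂μ with hBB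
  set I := ∫ x, f x * Lop u f x ∂μ with hII
  have hIE : I = -Eg := by linarith [hEI]
  have hA0 : 0 ≤ A := integral_nonneg fun x => sq_nonneg _
  have hB0 : 0 ≤ B := integral_nonneg fun x => sq_nonneg _
  have hE0 : 0 ≤ Eg := integral_nonneg fun x => by positivity
  have hμuniv : (μ Set.univ).toReal = 1 := by rw [measure_univ]; simp
  have hconst : ∀ r : ℝ, ∫ _x, r ∂μ = r := by
    intro r; rw [integral_const, Measure.real, hμuniv, one_smul]
  -- Poincaré for f - m
  have hgdiff : Differentiable ℝ (fun x => f x - m) := hfd.sub_const m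
  have hgint : Integrable (fun x => f x - m) μ := hfint.sub (integrable_const m)
  have hg2exp : (fun x => (f x - m) ^ 2) = fun x => (f x ^ 2 - (2 * m) * f x) + m ^ 2 := by
    funext x; ring
  have hg2int : Integrable (fun x => (f x - m) ^ 2) μ := by
    rw [hg2exp]; exact (hf2.sub (hfint.const_mul (2 * m))).add (integrable_const _)
  have hggrad : ∀ x, gradient (fun y => f y - m) x = gradient f x := by
    intro x; unfold gradient; rw [fderiv_sub_const]
  have hggrad2 : Integrable (fun x => ‖gradient (fun y => f y - m) x‖ ^ 2) μ :=
    hgrad2.congr (Eventually.of_forall fun x => by simp only [hggrad])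
  have hgmean : ∫ x, (f x - m) ∂μ = 0 := by
    rw [integral_sub hfint (integrable_const m), hconst]
    simp [hm]
  have hPo := hPoincare _ hgdiff hgint hg2int hggrad2 hgmean
  have ia0 : Integrable (fun x => 2 * m * f x) μ := hfint.const_mul _
  have iA0 : Integrable (fun x => f x ^ 2 - 2 * m * f x) μ := hf2.sub ia0
  have e1 : ∫ x, (f x - m) ^ 2 ∂μ = A - m ^ 2 := by
    rw [hg2exp, integral_add iA0 (integrable_const _),
      integral_sub hf2 ia0, integral_const_mul, hconst, ← hm, ← hA]
    ring
  have e2 : ∫ x, ‖gradient (fun y => f y - m) x‖ ^ 2 ∂μ = Eg :=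
    integral_congr_ae (Eventually.of_forall fun x => by simp only [hggrad])
  rw [e1, e2] at hPo
  -- Cauchy–Schwarz via the discriminant
  have hq : ∀ t : ℝ, 0 ≤ B * (t * t) + (2 * I) * t + (A - m ^ 2) := by
    intro t
    have hnn : 0 ≤ ∫ x, ((f x - m) + t * Lop u f x) ^ 2 ∂μ :=
      integral_nonneg fun x => sq_nonneg _
    have hexp2 : (fun x => ((f x - m) + t * Lop u f x) ^ 2)
        = fun x => ((f x ^ 2 - (2 * m) * f x) + m ^ 2)
          + (((2 * t) * (f x * Lop u f x) - (2 * t * m) * Lop u f x)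
            + (t * t) * (Lop u f x) ^ 2) := by
      funext x; ring
    have ib : Integrable (fun x => 2 * t * (f x * Lop u f x)) μ := hfLf.const_mul _
    have ic : Integrable (fun x => 2 * t * m * Lop u f x) μ := hL1.const_mul _
    have id' : Integrable (fun x => t * t * Lop u f x ^ 2) μ := hLf2.const_mul _
    have iB : Integrable (fun x => f x ^ 2 - 2 * m * f x + m ^ 2) μ :=
      iA0.add (integrable_const _)
    have iC : Integrable (fun x => 2 * t * (f x * Lop u f x) - 2 * t * m * Lop u f x) μ :=
      ib.sub ic
    have iD : Integrable
        (fun x => 2 * t * (f x * Lop u f x) - 2 * t * m * Lop u f x + t * t * Lop u f x ^ 2) μ :=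
      iC.add id'
    have hval : ∫ x, ((f x - m) + t * Lop u f x) ^ 2 ∂μ
        = B * (t * t) + (2 * I) * t + (A - m ^ 2) := by
      rw [hexp2, integral_add iB iD,
        integral_add iA0 (integrable_const _), integral_sub hf2 ia0,
        integral_add iC id', integral_sub ib ic,
        integral_const_mul, integral_const_mul, integral_const_mul, integral_const_mul,
        hconst, ← hm, ← hA, ← hII, ← hBB, hJ]
      ring
    rw [hval] at hnn
    exact hnn
  have hdisc := discrim_le_zero hq
  rw [discrim] at hdisc
  exact alg_main hCP hA0 hB0 hE0 hIE hPo hdisc
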